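/- In the setting of the previous construction (E odd exact Courant algebroid, 𝓕 a B_n-generalized almost complex structure with Ker 𝓕 spanned by u₀, D torsion-free with Du₀=0, and D̃ defined by ⟨D̃_u v,w⟩ = ⟨D_u v,w⟩ − (1/4)⟨{A_u,𝓕}v,w⟩ − (1/2)⟨𝓕(D_u𝓕)v,w⟩), the torsion of D̃ satisfies: T^{D̃}(u,v,w) = (1/4)⟨N_𝓕(u,v),w⟩ for all u,v,w ∈ Γ(U^⊥), and T^{D̃}(u,v,u₀) = (1/2)⟨(𝐋_{u₀}𝓕)u, 𝓕v⟩ for all u,v ∈ Γ(E). -/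

import Mathlib

/-! Common framework: Courant algebroids over a smooth manifold, described through
their fibers, their (smooth) sections, scalar product, anchor and Dorfman bracket;
generalized connections, torsion, generalized metrics, `Bₙ`-generalized almost
complex structures on odd exact Courant algebroids, and generalized complex
structures on Courant algebroids of even rank. -/

open Manifold

noncomputable section

/-- A bilinear symmetric form on a real vector space has signature `(p, q)`. -/
def BilinSignature {V : Type*} [AddCommGroup V] [Module ℝ V]
    (g : V →ₗ[ℝ] V →ₗ[ℝ] ℝ) (p q : ℕ) : Prop :=
  ∃ P N : Submodule ℝ V, IsCompl P N ∧
    (∀ v ∈ P, ∀ w ∈ N, g v w = 0) ∧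
    Module.finrank ℝ P = p ∧ Module.finrank ℝ N = q ∧
    (∀ v ∈ P, v ≠ 0 → 0 < g v v) ∧ (∀ v ∈ N, v ≠ 0 → g v v < 0)

/-- The derivative `(π(u)f)(x)` of a function `f` in the direction of a tangent vector. -/
def mdirDeriv {m : ℕ} {M : Type*} [TopologicalSpace M]
    [ChartedSpace (EuclideanSpace ℝ (Fin m)) M]
    [IsManifold (𝓡 m) (⊤ : ℕ∞) M]
    (f : M → ℝ) (x : M) (v : TangentSpace (𝓡 m) x) : ℝ :=
  mfderiv (𝓡 m) 𝓘(ℝ, ℝ) f x v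

/-- A Courant algebroid over an `m`-dimensional manifold `M`, presented by the data of
its fibers, its smooth sections, its fiberwise scalar product `⟨·,·⟩`, its anchor
`π : E → TM` and its (Dorfman) bracket `[·,·]` on sections, subject to the axioms
`[u,[v,w]] = [[u,v],w] + [v,[u,w]]`, `[u,fv] = f[u,v] + (π(u)f)v`,
`π(u)⟨v,w⟩ = ⟨[u,v],w⟩ + ⟨v,[u,w]⟩` and `⟨[u,v]+[v,u],w⟩ = π(w)⟨u,v⟩`. -/
structure CourantAlgebroid (m : ℕ) (M : Type*) [TopologicalSpace M]
    [ChartedSpace (EuclideanSpace ℝ (Fin m)) M]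
    [IsManifold (𝓡 m) (⊤ : ℕ∞) M] where
  /-- the fiber of the vector bundle `E` at `x ∈ M` -/
  Fib : M → Type
  [fibAdd : ∀ x, AddCommGroup (Fib x)]
  [fibMod : ∀ x, Module ℝ (Fib x)]
  [fibFin : ∀ x, FiniteDimensional ℝ (Fib x)]
  /-- the set `Γ(E)` of smooth sections of `E` -/
  secs : Set (∀ x, Fib x)
  secs_zero : (fun x => (0 : Fib x)) ∈ secs
  secs_add : ∀ {u v}, u ∈ secs → v ∈ secs → (fun x => u x + v x) ∈ secs
  secs_neg : ∀ {u}, u ∈ secs → (fun x => -(u x)) ∈ secs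
  secs_smul : ∀ {f : M → ℝ}, ContMDiff (𝓡 m) 𝓘(ℝ, ℝ) (⊤ : ℕ∞) f →
    ∀ {u}, u ∈ secs → (fun x => f x • u x) ∈ secs
  /-- the scalar product `⟨·,·⟩` -/
  g : ∀ x, Fib x →ₗ[ℝ] Fib x →ₗ[ℝ] ℝ
  g_symm : ∀ x u v, g x u v = g x v u
  g_nondeg : ∀ x (v : Fib x), (∀ w, g x v w = 0) → v = 0
  g_smooth : ∀ {u v}, u ∈ secs → v ∈ secs →
    ContMDiff (𝓡 m) 𝓘(ℝ, ℝ) (⊤ : ℕ∞) (fun x => g x (u x) (v x))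
  /-- the anchor `π : E → TM` -/
  anchor : ∀ x, Fib x →ₗ[ℝ] TangentSpace (𝓡 m) x
  anchor_smooth : ∀ {u}, u ∈ secs →
    ContMDiff (𝓡 m) (𝓡 m).tangent (⊤ : ℕ∞)
      (fun x => (⟨x, anchor x (u x)⟩ : TangentBundle (𝓡 m) M))
  /-- the Dorfman bracket `[·,·]` -/
  bracket : (∀ x, Fib x) → (∀ x, Fib x) → (∀ x, Fib x)
  bracket_secs : ∀ {u v}, u ∈ secs → v ∈ secs → bracket u v ∈ secs
  bracket_add_left : ∀ {u v w}, u ∈ secs → v ∈ secs → w ∈ secs →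
    bracket (fun x => u x + v x) w = fun x => bracket u w x + bracket v w x
  bracket_add_right : ∀ {u v w}, u ∈ secs → v ∈ secs → w ∈ secs →
    bracket u (fun x => v x + w x) = fun x => bracket u v x + bracket u w x
  bracket_smul_left : ∀ (c : ℝ) {u v}, u ∈ secs → v ∈ secs →
    bracket (fun x => c • u x) v = fun x => c • bracket u v x
  bracket_smul_right : ∀ (c : ℝ) {u v}, u ∈ secs → v ∈ secs →
    bracket u (fun x => c • v x) = fun x => c • bracket u v x
  /-- `[u,[v,w]] = [[u,v],w] + [v,[u,w]]` -/
  jacobi : ∀ {u v w}, u ∈ secs → v ∈ secs → w ∈ secs →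
    bracket u (bracket v w)
      = fun x => bracket (bracket u v) w x + bracket v (bracket u w) x
  /-- `[u,fv] = f[u,v] + (π(u)f) v` -/
  leibniz : ∀ {f : M → ℝ}, ContMDiff (𝓡 m) 𝓘(ℝ, ℝ) (⊤ : ℕ∞) f → ∀ {u v},
    u ∈ secs → v ∈ secs →
    bracket u (fun x => f x • v x)
      = fun x => f x • bracket u v x
          + mdirDeriv f x (anchor x (u x)) • v x
  /-- `π(u)⟨v,w⟩ = ⟨[u,v],w⟩ + ⟨v,[u,w]⟩` -/
  compat : ∀ {u v w}, u ∈ secs → v ∈ secs → w ∈ secs → ∀ x,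
    mdirDeriv (fun y => g y (v y) (w y)) x (anchor x (u x))
      = g x (bracket u v x) (w x) + g x (v x) (bracket u w x)
  /-- `⟨[u,v]+[v,u],w⟩ = π(w)⟨u,v⟩` -/
  symBracket : ∀ {u v w}, u ∈ secs → v ∈ secs → w ∈ secs → ∀ x,
    g x (bracket u v x + bracket v u x) (w x)
      = mdirDeriv (fun y => g y (u y) (v y)) x (anchor x (w x))

attribute [instance] CourantAlgebroid.fibAdd CourantAlgebroid.fibMod CourantAlgebroid.fibFin

/-- An odd exact Courant algebroid over an `n`-dimensional manifold: a Courant algebroid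
of rank `2n+1` whose scalar product has signature `(n+1, n)`. -/
structure OddExactCourantAlgebroid (n : ℕ) (M : Type*) [TopologicalSpace M]
    [ChartedSpace (EuclideanSpace ℝ (Fin n)) M]
    [IsManifold (𝓡 n) (⊤ : ℕ∞) M]
    extends CourantAlgebroid n M where
  rank_eq : ∀ x, Module.finrank ℝ (Fib x) = 2 * n + 1
  g_sig : ∀ x, BilinSignature (g x) (n + 1) n

variable {m : ℕ} {M : Type*} [TopologicalSpace M]
  [ChartedSpace (EuclideanSpace ℝ (Fin m)) M]
  [IsManifold (𝓡 m) (⊤ : ℕ∞) M]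

/-- A generalized connection `D` on a Courant algebroid: `D_v (f u) = (π(v)f) u + f D_v u`
and `π(w)⟨u,v⟩ = ⟨D_w u, v⟩ + ⟨u, D_w v⟩`; moreover `D_v u` is tensorial
(`C^∞(M)`-linear) in the direction `v`. `D.D v u` denotes `D_v u`. -/
structure GenConnection (E : CourantAlgebroid m M) where
  D : (∀ x, E.Fib x) → (∀ x, E.Fib x) → (∀ x, E.Fib x)
  d_secs : ∀ {v u}, v ∈ E.secs → u ∈ E.secs → D v u ∈ E.secs
  add_dir : ∀ {v w u}, v ∈ E.secs → w ∈ E.secs → u ∈ E.secs →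
    D (fun x => v x + w x) u = fun x => D v u x + D w u x
  smul_dir : ∀ {f : M → ℝ}, ContMDiff (𝓡 m) 𝓘(ℝ, ℝ) (⊤ : ℕ∞) f → ∀ {v u},
    v ∈ E.secs → u ∈ E.secs →
    D (fun x => f x • v x) u = fun x => f x • D v u x
  add_sec : ∀ {v u w}, v ∈ E.secs → u ∈ E.secs → w ∈ E.secs →
    D v (fun x => u x + w x) = fun x => D v u x + D v w x
  smul_sec : ∀ (c : ℝ) {v u}, v ∈ E.secs → u ∈ E.secs →
    D v (fun x => c • u x) = fun x => c • D v u x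
  leibniz : ∀ {f : M → ℝ}, ContMDiff (𝓡 m) 𝓘(ℝ, ℝ) (⊤ : ℕ∞) f → ∀ {v u},
    v ∈ E.secs → u ∈ E.secs →
    D v (fun x => f x • u x)
      = fun x => mdirDeriv f x (E.anchor x (v x)) • u x + f x • D v u x
  metric : ∀ {u v w}, u ∈ E.secs → v ∈ E.secs → w ∈ E.secs → ∀ x,
    mdirDeriv (fun y => E.g y (u y) (v y)) x (E.anchor x (w x))
      = E.g x (D w u x) (v x) + E.g x (u x) (D w v x)

namespace GenConnection

variable {E : CourantAlgebroid m M}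

/-- The torsion `T^D(u,v,w) = ⟨D_u v − D_v u − [u,v], w⟩ + ⟨D_w u, v⟩` of a generalized
connection. -/
def torsion (D : GenConnection E) (u v w : ∀ x, E.Fib x) : M → ℝ :=
  fun x => E.g x (D.D u v x - D.D v u x - E.bracket u v x) (w x) + E.g x (D.D w u x) (v x)

/-- A generalized connection is torsion-free if its torsion vanishes. -/
def TorsionFree (D : GenConnection E) : Prop :=
  ∀ {u v w}, u ∈ E.secs → v ∈ E.secs → w ∈ E.secs → ∀ x, D.torsion u v w x = 0

/-- `D` preserves the endomorphism (field) `F`, i.e. `DF = 0`: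
`(D_u F) v = D_u (F v) − F (D_u v) = 0` for all sections `u`, `v`. -/
def PreservesEnd (D : GenConnection E) (F : ∀ x, E.Fib x →ₗ[ℝ] E.Fib x) : Prop :=
  ∀ {u v}, u ∈ E.secs → v ∈ E.secs → ∀ x, D.D u (fun y => F y (v y)) x = F x (D.D u v x)

/-- `D` preserves the section `s`, i.e. `Ds = 0`. -/
def PreservesSec (D : GenConnection E) (s : ∀ x, E.Fib x) : Prop :=
  ∀ {v}, v ∈ E.secs → ∀ x, D.D v s x = 0

end GenConnection

/-- The i-eigenbundle `L ⊂ E^ℂ` of a family `F` of endomorphisms has its space of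
sections closed under the (complexified) Dorfman bracket.  A complex section
`s = u + iv` of `E^ℂ` lies in `Γ(L)` iff `F u = -v` and `F v = u`; the bracket of
`u + iv` and `u' + iv'` is `([u,u'] - [v,v']) + i([u,v'] + [v,u'])`. -/
def CourantAlgebroid.IntegrableF (E : CourantAlgebroid m M)
    (F : ∀ x, E.Fib x →ₗ[ℝ] E.Fib x) : Prop :=
  ∀ {u v u' v'}, u ∈ E.secs → v ∈ E.secs → u' ∈ E.secs → v' ∈ E.secs →
    (∀ x, F x (u x) = -(v x)) → (∀ x, F x (v x) = u x) →
    (∀ x, F x (u' x) = -(v' x)) → (∀ x, F x (v' x) = u' x) →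
    (∀ x, F x (E.bracket u u' x - E.bracket v v' x)
        = -(E.bracket u v' x + E.bracket v u' x)) ∧
    (∀ x, F x (E.bracket u v' x + E.bracket v u' x)
        = E.bracket u u' x - E.bracket v v' x)

/-- A generalized (admissible) metric on a Courant algebroid, described by the associated
orthogonal, `⟨·,·⟩`-symmetric involution `G^end` of `E`; its `−1`-eigenbundle `E₋`
(the subbundle defining the generalized metric) is required to have nondegenerate
scalar product and anchor restricting to an isomorphism `E₋ → TM`. -/
structure GenMetric (E : CourantAlgebroid m M) where
  Gend : ∀ x, E.Fib x →ₗ[ℝ] E.Fib x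
  smooth : ∀ {u}, u ∈ E.secs → (fun x => Gend x (u x)) ∈ E.secs
  symm : ∀ x u v, E.g x (Gend x u) v = E.g x u (Gend x v)
  invol : ∀ x v, Gend x (Gend x v) = v
  nondeg_minus : ∀ x (v : E.Fib x), Gend x v = -v →
    (∀ w, Gend x w = -w → E.g x v w = 0) → v = 0
  anchor_bij : ∀ x, Function.Bijective
    (fun v : {w : E.Fib x // Gend x w = -w} => E.anchor x v.1)

/-- `DG = 0`, i.e. `π(w) G(u,v) = G(D_w u, v) + G(u, D_w v)` where
`G(u,v) = ⟨G^end u, v⟩`. -/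
def GenConnection.PreservesMetric {E : CourantAlgebroid m M}
    (D : GenConnection E) (G : GenMetric E) : Prop :=
  ∀ {u v w}, u ∈ E.secs → v ∈ E.secs → w ∈ E.secs → ∀ x,
    mdirDeriv (fun y => E.g y (G.Gend y (u y)) (v y)) x (E.anchor x (w x))
      = E.g x (G.Gend x (D.D w u x)) (v x) + E.g x (G.Gend x (u x)) (D.D w v x)

/-- A `Bₙ`-generalized almost complex structure on an odd exact Courant algebroid `E`
over an `n`-dimensional manifold: a `⟨·,·⟩`-skew-symmetric endomorphism `𝓕` of rank `2n`
satisfying `𝓕² = −Id + (−1)ⁿ ⟨·,u₀⟩ u₀` for a section `u₀` with `⟨u₀,u₀⟩ = (−1)ⁿ`. -/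
structure BnGACS {n : ℕ} {M' : Type*} [TopologicalSpace M']
    [ChartedSpace (EuclideanSpace ℝ (Fin n)) M']
    [IsManifold (𝓡 n) (⊤ : ℕ∞) M']
    (E : OddExactCourantAlgebroid n M') where
  F : ∀ x, E.Fib x →ₗ[ℝ] E.Fib x
  smooth : ∀ {u}, u ∈ E.secs → (fun x => F x (u x)) ∈ E.secs
  skew : ∀ x u v, E.g x (F x u) v = - E.g x u (F x v)
  u₀ : ∀ x, E.Fib x
  u₀_mem : u₀ ∈ E.secs
  u₀_norm : ∀ x, E.g x (u₀ x) (u₀ x) = (-1 : ℝ) ^ n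
  F_sq : ∀ x v, F x (F x v) = -v + ((-1 : ℝ) ^ n * E.g x v (u₀ x)) • u₀ x
  rank_F : ∀ x, Module.finrank ℝ (LinearMap.range (F x)) = 2 * n

namespace BnGACS

variable {n : ℕ} {M' : Type*} [TopologicalSpace M']
  [ChartedSpace (EuclideanSpace ℝ (Fin n)) M']
  [IsManifold (𝓡 n) (⊤ : ℕ∞) M']
  {E : OddExactCourantAlgebroid n M'}

/-- `𝓕` applied to a section. -/
def ap (J : BnGACS E) (u : ∀ x, E.Fib x) : ∀ x, E.Fib x := fun x => J.F x (u x)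

/-- Integrability of a `Bₙ`-generalized almost complex structure: the sections of its
i-eigenbundle `L ⊂ E^ℂ` are closed under the Dorfman bracket. -/
def Integrable (J : BnGACS E) : Prop :=
  CourantAlgebroid.IntegrableF E.toCourantAlgebroid J.F

/-- `u ∈ Γ(U^⊥)`, where `U = Ker 𝓕` is spanned by `u₀`. -/
def Perp (J : BnGACS E) (u : ∀ x, E.Fib x) : Prop :=
  ∀ x, E.g x (u x) (J.u₀ x) = 0

/-- The Nijenhuis tensor `N_𝓕(u,v) = [𝓕u,𝓕v] − [u,v] − 𝓕([𝓕u,v] + [u,𝓕v])`. -/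
def Nij (J : BnGACS E) (u v : ∀ x, E.Fib x) : ∀ x, E.Fib x :=
  fun x => E.bracket (J.ap u) (J.ap v) x - E.bracket u v x
    - J.F x (E.bracket (J.ap u) v x + E.bracket u (J.ap v) x)

/-- The Dorfman-Lie derivative `(𝐋_{u₀} 𝓕) u = [u₀, 𝓕u] − 𝓕 [u₀, u]`. -/
def lieF (J : BnGACS E) (u : ∀ x, E.Fib x) : ∀ x, E.Fib x :=
  fun x => E.bracket J.u₀ (J.ap u) x - J.F x (E.bracket J.u₀ u x)

/-- The covariant derivative `(D_u 𝓕) v = D_u (𝓕 v) − 𝓕 (D_u v)`. -/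
def covF (J : BnGACS E) (D : GenConnection E.toCourantAlgebroid)
    (u v : ∀ x, E.Fib x) : ∀ x, E.Fib x :=
  fun x => D.D u (J.ap v) x - J.F x (D.D u v x)

end BnGACS

/-- A generalized (almost) complex structure on a Courant algebroid of even rank:
a `⟨·,·⟩`-skew-symmetric endomorphism `𝓙` with `𝓙² = −Id`, whose i-eigenbundle has
sections closed under the Dorfman bracket. -/
structure GenComplex (E : CourantAlgebroid m M) where
  J : ∀ x, E.Fib x →ₗ[ℝ] E.Fib x
  smooth : ∀ {u}, u ∈ E.secs → (fun x => J x (u x)) ∈ E.secs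
  skew : ∀ x u v, E.g x (J x u) v = - E.g x u (J x v)
  sq : ∀ x v, J x (J x v) = -v
  integrable : CourantAlgebroid.IntegrableF E J

end

variable {n : ℕ} {M : Type*} [TopologicalSpace M]
  [ChartedSpace (EuclideanSpace ℝ (Fin n)) M]
  [IsManifold (𝓡 n) (⊤ : ℕ∞) M]

/-!
Because `D` is torsion-free, the torsion of `D̃` is the alternating sum
`S(u,v,w) − S(v,u,w) + S(w,u,v)` of the difference tensor `S(a,b,c) = ⟨D̃_a b − D_a b, c⟩`,
which the construction expresses through `D𝓕` and `A`; torsion-freeness likewise expresses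
`⟨N_𝓕(u,v),w⟩` and `⟨(𝐋_{u₀}𝓕)u, c⟩` through `D𝓕`. Both identities then reduce to two
symmetries of `⟨(D_a𝓕)b, c⟩`: it is skew in `b, c` (`D` is metric and `𝓕` skew), and
`(D_a𝓕)𝓕 = −𝓕(D_a𝓕)`, because `Du₀ = 0` makes `D` commute with `𝓕² = −Id + (−1)ⁿ⟨·,u₀⟩u₀`.
-/

namespace GenConnection

variable {E : CourantAlgebroid n M}

theorem D_neg (D : GenConnection E) {a b : ∀ x, E.Fib x} (ha : a ∈ E.secs) (hb : b ∈ E.secs) :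
    D.D a (fun x => -b x) = fun x => -D.D a b x := by
  simpa only [neg_one_smul] using D.smul_sec (-1) ha hb

theorem g_bracket_of_torsionFree {D : GenConnection E} (hD : D.TorsionFree)
    {a b c : ∀ x, E.Fib x} (ha : a ∈ E.secs) (hb : b ∈ E.secs) (hc : c ∈ E.secs) (x : M) :
    E.g x (E.bracket a b x) (c x)
      = E.g x (D.D a b x) (c x) - E.g x (D.D b a x) (c x) + E.g x (D.D c a x) (b x) := by
  have h := hD ha hb hc x
  simp only [torsion, map_sub, LinearMap.sub_apply] at h
  linarith

theorem g_bracket_of_preservesSec {D : GenConnection E} (hD : D.TorsionFree)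
    {s b c : ∀ x, E.Fib x} (hDs : D.PreservesSec s)
    (hs : s ∈ E.secs) (hb : b ∈ E.secs) (hc : c ∈ E.secs) (x : M) :
    E.g x (E.bracket s b x) (c x) = E.g x (D.D s b x) (c x) := by
  rw [g_bracket_of_torsionFree hD hs hb hc, hDs hb, hDs hc]
  simp

theorem torsion_eq_of_torsionFree {D : GenConnection E} (hD : D.TorsionFree)
    (D' : GenConnection E) {u v w : ∀ x, E.Fib x}
    (hu : u ∈ E.secs) (hv : v ∈ E.secs) (hw : w ∈ E.secs) (x : M) :
    D'.torsion u v w x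
      = (E.g x (D'.D u v x) (w x) - E.g x (D.D u v x) (w x))
        - (E.g x (D'.D v u x) (w x) - E.g x (D.D v u x) (w x))
        + (E.g x (D'.D w u x) (v x) - E.g x (D.D w u x) (v x)) := by
  simp only [torsion, map_sub, LinearMap.sub_apply, g_bracket_of_torsionFree hD hu hv hw]
  ring

end GenConnection

namespace BnGACS

variable {E : OddExactCourantAlgebroid n M} (J : BnGACS E)

theorem ap_mem {u : ∀ x, E.Fib x} (hu : u ∈ E.secs) : J.ap u ∈ E.secs :=
  J.smooth hu

@[simp]
theorem ap_apply (u : ∀ x, E.Fib x) (x : M) : J.ap u x = J.F x (u x) :=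
  rfl

theorem F_u₀ (x : M) : J.F x (J.u₀ x) = 0 := by
  set y := J.F x (J.u₀ x)
  have hy : E.g x y (J.u₀ x) = 0 := by
    have := J.skew x (J.u₀ x) (J.u₀ x)
    rw [E.g_symm x (J.u₀ x)] at this
    linarith
  have hFy : J.F x y = 0 := by
    rw [J.F_sq, J.u₀_norm, ← mul_pow]
    norm_num
  have := J.F_sq x y
  rwa [hFy, map_zero, hy, mul_zero, zero_smul, add_zero, zero_eq_neg] at this

theorem g_F_u₀ (x : M) (y : E.Fib x) : E.g x (J.F x y) (J.u₀ x) = 0 := by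
  rw [J.skew, F_u₀, map_zero, neg_zero]

theorem perp_ap (u : ∀ x, E.Fib x) : J.Perp (J.ap u) :=
  fun x => J.g_F_u₀ x (u x)

theorem F_F_of_perp {x : M} {y : E.Fib x} (hy : E.g x y (J.u₀ x) = 0) :
    J.F x (J.F x y) = -y := by
  rw [J.F_sq, hy, mul_zero, zero_smul, add_zero]

variable {J} {D : GenConnection E.toCourantAlgebroid}

theorem D_ap (a b : ∀ x, E.Fib x) (x : M) :
    D.D a (J.ap b) x = J.covF D a b x + J.F x (D.D a b x) :=
  (sub_add_cancel _ _).symm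

theorem covF_u₀ (hDu₀ : D.PreservesSec J.u₀) {a : ∀ x, E.Fib x} (ha : a ∈ E.secs) (x : M) :
    J.covF D a J.u₀ x = 0 := by
  have hap : J.ap J.u₀ = fun y => (0 : ℝ) • J.u₀ y := funext fun y => by
    rw [zero_smul]
    exact J.F_u₀ y
  rw [covF, hap, D.smul_sec 0 ha J.u₀_mem, hDu₀ ha x]
  simp

theorem g_covF_comm {a b c : ∀ x, E.Fib x} (ha : a ∈ E.secs) (hb : b ∈ E.secs)
    (hc : c ∈ E.secs) (x : M) :
    E.g x (J.covF D a b x) (c x) = -E.g x (J.covF D a c x) (b x) := by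
  have hFb := D.metric (J.ap_mem hb) hc ha x
  have hFc := D.metric hb (E.secs_neg (J.ap_mem hc)) ha x
  have hfun : (fun y => E.g y (J.ap b y) (c y)) = fun y => E.g y (b y) (-J.ap c y) :=
    funext fun y => by rw [map_neg]; exact J.skew y (b y) (c y)
  rw [hfun, hFc, D.D_neg ha (J.ap_mem hc)] at hFb
  simp only [covF, map_sub, map_neg, LinearMap.sub_apply, ap] at hFb ⊢
  linarith [E.g_symm x (J.F x (b x)) (D.D a c x), E.g_symm x (b x) (D.D a (J.ap c) x),
    J.skew x (D.D a b x) (c x), J.skew x (D.D a c x) (b x)]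

theorem D_ap_ap (hDu₀ : D.PreservesSec J.u₀) {a b : ∀ x, E.Fib x} (ha : a ∈ E.secs)
    (hb : b ∈ E.secs) (x : M) :
    D.D a (J.ap (J.ap b)) x = J.F x (J.F x (D.D a b x)) := by
  have hg := E.g_smooth hb J.u₀_mem
  have hgu₀ := E.secs_smul hg J.u₀_mem
  have hFF : J.ap (J.ap b)
      = fun y => -b y + (-1 : ℝ) ^ n • (E.g y (b y) (J.u₀ y) • J.u₀ y) :=
    funext fun y => by rw [smul_smul]; exact J.F_sq y (b y)
  have hdg := D.metric hb J.u₀_mem ha x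
  rw [hDu₀ ha x, map_zero, add_zero] at hdg
  rw [hFF, D.add_sec ha (E.secs_neg hb) (E.secs_smul contMDiff_const hgu₀), D.D_neg ha hb,
    D.smul_sec _ ha hgu₀, D.leibniz hg ha J.u₀_mem]
  beta_reduce
  rw [hdg, hDu₀ ha x, J.F_sq, smul_zero, add_zero, smul_smul]

theorem covF_ap (hDu₀ : D.PreservesSec J.u₀) {a b : ∀ x, E.Fib x} (ha : a ∈ E.secs)
    (hb : b ∈ E.secs) (x : M) :
    J.covF D a (J.ap b) x = -J.F x (J.covF D a b x) := by
  rw [covF, D_ap_ap hDu₀ ha hb, D_ap, map_add]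
  abel

theorem g_covF_ap (hDu₀ : D.PreservesSec J.u₀) {a b : ∀ x, E.Fib x} (ha : a ∈ E.secs)
    (hb : b ∈ E.secs) (x : M) (c : E.Fib x) :
    E.g x (J.covF D a (J.ap b) x) c = E.g x (J.covF D a b x) (J.F x c) := by
  rw [covF_ap hDu₀ ha hb, map_neg, LinearMap.neg_apply, J.skew, neg_neg]

theorem g_nij_of_torsionFree (hD : D.TorsionFree) {u v w : ∀ x, E.Fib x} (hu : u ∈ E.secs)
    (hv : v ∈ E.secs) (hw : w ∈ E.secs) (hv' : J.Perp v) (hw' : J.Perp w) (x : M) :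
    E.g x (J.Nij u v x) (w x)
      = E.g x (J.covF D (J.ap u) v x) (w x) - E.g x (J.covF D (J.ap v) u x) (w x)
        + E.g x (J.covF D w u x) (J.F x (v x)) + E.g x (J.covF D u v x) (J.F x (w x))
        - E.g x (J.covF D v u x) (J.F x (w x)) + E.g x (J.covF D (J.ap w) u x) (v x) := by
  have hFu := J.ap_mem hu
  have hFv := J.ap_mem hv
  have hFw := J.ap_mem hw
  have b₁ := D.g_bracket_of_torsionFree hD hFu hFv hw x
  have b₂ := D.g_bracket_of_torsionFree hD hu hv hw x
  have b₃ := D.g_bracket_of_torsionFree hD hFu hv hFw x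
  have b₄ := D.g_bracket_of_torsionFree hD hu hFv hFw x
  simp only [Nij, ap_apply, D_ap, map_add, LinearMap.add_apply, map_sub, LinearMap.sub_apply,
    J.skew, J.F_F_of_perp (hv' x), J.F_F_of_perp (hw' x), map_neg]
    at b₁ b₂ b₃ b₄ ⊢
  linarith

theorem g_lieF (hD : D.TorsionFree) (hDu₀ : D.PreservesSec J.u₀) {u c : ∀ x, E.Fib x}
    (hu : u ∈ E.secs) (hc : c ∈ E.secs) (x : M) :
    E.g x (J.lieF u x) (c x) = E.g x (J.covF D J.u₀ u x) (c x) := by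
  have h₁ := D.g_bracket_of_preservesSec hD hDu₀ J.u₀_mem (J.ap_mem hu) hc x
  have h₂ := D.g_bracket_of_preservesSec hD hDu₀ J.u₀_mem hu (J.ap_mem hc) x
  simp only [lieF, covF, ap_apply, map_sub, LinearMap.sub_apply, J.skew] at h₂ ⊢
  rw [h₁, h₂]

theorem g_covF_ap_comm (hDu₀ : D.PreservesSec J.u₀) {a b c : ∀ x, E.Fib x} (ha : a ∈ E.secs)
    (hb : b ∈ E.secs) (hc : c ∈ E.secs) (x : M) :
    E.g x (J.covF D a b x) (J.F x (c x)) = -E.g x (J.covF D a c x) (J.F x (b x)) := by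
  rw [← ap_apply, g_covF_comm ha hb (J.ap_mem hc), g_covF_ap hDu₀ ha hc]

variable (J D)

/-- `A u` is the paper's `A_u`. -/
structure IsSymmetrizedCovF (A : (∀ x, E.Fib x) → (∀ x, E.Fib x) → (∀ x, E.Fib x)) : Prop where
  symm : ∀ u v w, u ∈ E.secs → v ∈ E.secs → w ∈ E.secs → ∀ x,
    E.g x (A u v x) (w x) = E.g x (A u w x) (v x)
  apply_u₀ : ∀ u, u ∈ E.secs → ∀ x, A u J.u₀ x = 0
  g_apply_of_perp : ∀ u v w, u ∈ E.secs → v ∈ E.secs → w ∈ E.secs →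
    J.Perp v → J.Perp w → ∀ x,
    E.g x (A u v x) (w x)
      = (1 / 2) * (E.g x (J.covF D v u x) (w x) + E.g x (J.covF D w u x) (v x))

/-- `Dt` is the paper's `D̃`. -/
def IsTildeConnection (A : (∀ x, E.Fib x) → (∀ x, E.Fib x) → (∀ x, E.Fib x))
    (Dt : GenConnection E.toCourantAlgebroid) : Prop :=
  ∀ u v w, u ∈ E.secs → v ∈ E.secs → w ∈ E.secs → ∀ x,
    E.g x (Dt.D u v x) (w x)
      = E.g x (D.D u v x) (w x)
        - (1 / 4) * E.g x (A u (J.ap v) x + J.F x (A u v x)) (w x)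
        - (1 / 2) * E.g x (J.F x (J.covF D u v x)) (w x)

variable {J D} {A : (∀ x, E.Fib x) → (∀ x, E.Fib x) → (∀ x, E.Fib x)}

namespace IsSymmetrizedCovF

theorem g_apply_u₀ (hA : J.IsSymmetrizedCovF D A) {a b : ∀ x, E.Fib x} (ha : a ∈ E.secs)
    (hb : b ∈ E.secs) (x : M) :
    E.g x (A a b x) (J.u₀ x) = 0 := by
  rw [hA.symm a b J.u₀ ha hb J.u₀_mem, hA.apply_u₀ a ha, map_zero, LinearMap.zero_apply]

theorem g_apply_u₀_left (hA : J.IsSymmetrizedCovF D A) (hDu₀ : D.PreservesSec J.u₀)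
    {s t : ∀ x, E.Fib x} (hs : s ∈ E.secs) (hs' : J.Perp s) (ht : t ∈ E.secs) (x : M) :
    E.g x (A J.u₀ s x) (t x) = 0 := by
  -- `t` and `-𝓕²t ∈ Γ(U^⊥)` differ by a multiple of `u₀`, which `A J.u₀ s` is orthogonal to.
  have hFFt := J.ap_mem (J.ap_mem ht)
  have h := hA.g_apply_of_perp J.u₀ s _ J.u₀_mem hs hFFt hs' (J.perp_ap _) x
  rw [covF_u₀ hDu₀ hs, covF_u₀ hDu₀ hFFt] at h
  simp only [ap_apply, J.F_sq, map_add, map_neg, map_smul, smul_eq_mul,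
    hA.g_apply_u₀ J.u₀_mem hs, map_zero, LinearMap.zero_apply] at h
  linarith

end IsSymmetrizedCovF

namespace IsTildeConnection

variable {Dt : GenConnection E.toCourantAlgebroid}

theorem g_sub (hDt : J.IsTildeConnection D A Dt) {a b c : ∀ x, E.Fib x} (ha : a ∈ E.secs)
    (hb : b ∈ E.secs) (hc : c ∈ E.secs) (x : M) :
    E.g x (Dt.D a b x) (c x) - E.g x (D.D a b x) (c x)
      = -(1 / 4) * (E.g x (A a (J.ap b) x) (c x) - E.g x (A a b x) (J.F x (c x)))
        + (1 / 2) * E.g x (J.covF D a b x) (J.F x (c x)) := by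
  rw [hDt a b c ha hb hc x]
  simp only [map_add, LinearMap.add_apply, J.skew]
  ring

theorem g_sub_of_perp (hDt : J.IsTildeConnection D A Dt) (hA : J.IsSymmetrizedCovF D A)
    {a b c : ∀ x, E.Fib x} (ha : a ∈ E.secs) (hb : b ∈ E.secs) (hc : c ∈ E.secs)
    (hb' : J.Perp b) (hc' : J.Perp c) (x : M) :
    E.g x (Dt.D a b x) (c x) - E.g x (D.D a b x) (c x)
      = -(1 / 8) * (E.g x (J.covF D (J.ap b) a x) (c x)
          + E.g x (J.covF D c a x) (J.F x (b x)) - E.g x (J.covF D b a x) (J.F x (c x))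
          - E.g x (J.covF D (J.ap c) a x) (b x))
        + (1 / 2) * E.g x (J.covF D a b x) (J.F x (c x)) := by
  have h₁ := hA.g_apply_of_perp a _ c ha (J.ap_mem hb) hc (J.perp_ap b) hc' x
  have h₂ := hA.g_apply_of_perp a b _ ha hb (J.ap_mem hc) hb' (J.perp_ap c) x
  simp only [ap_apply] at h₁ h₂
  rw [hDt.g_sub ha hb hc, h₁, h₂]
  ring

theorem g_sub_u₀ (hDt : J.IsTildeConnection D A Dt) (hA : J.IsSymmetrizedCovF D A)
    {a b : ∀ x, E.Fib x} (ha : a ∈ E.secs) (hb : b ∈ E.secs) (x : M) :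
    E.g x (Dt.D a b x) (J.u₀ x) - E.g x (D.D a b x) (J.u₀ x) = 0 := by
  rw [hDt.g_sub ha hb J.u₀_mem, hA.g_apply_u₀ ha (J.ap_mem hb), J.F_u₀, map_zero, map_zero]
  ring

theorem g_u₀_sub (hDt : J.IsTildeConnection D A Dt) (hA : J.IsSymmetrizedCovF D A)
    (hDu₀ : D.PreservesSec J.u₀) {b c : ∀ x, E.Fib x} (hb : b ∈ E.secs) (hc : c ∈ E.secs)
    (x : M) :
    E.g x (Dt.D J.u₀ b x) (c x) - E.g x (D.D J.u₀ b x) (c x)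
      = (1 / 2) * E.g x (J.covF D J.u₀ b x) (J.F x (c x)) := by
  have h := hA.symm J.u₀ b _ J.u₀_mem hb (J.ap_mem hc) x
  rw [ap_apply, hA.g_apply_u₀_left hDu₀ (J.ap_mem hc) (J.perp_ap c) hb] at h
  rw [hDt.g_sub J.u₀_mem hb hc, hA.g_apply_u₀_left hDu₀ (J.ap_mem hb) (J.perp_ap b) hc, h]
  ring

theorem torsion_of_perp (hDt : J.IsTildeConnection D A Dt) (hA : J.IsSymmetrizedCovF D A)
    (hD : D.TorsionFree) (hDu₀ : D.PreservesSec J.u₀) {u v w : ∀ x, E.Fib x}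
    (hu : u ∈ E.secs) (hv : v ∈ E.secs) (hw : w ∈ E.secs)
    (hu' : J.Perp u) (hv' : J.Perp v) (hw' : J.Perp w) (x : M) :
    Dt.torsion u v w x = (1 / 4) * E.g x (J.Nij u v x) (w x) := by
  rw [D.torsion_eq_of_torsionFree hD Dt hu hv hw, hDt.g_sub_of_perp hA hu hv hw hv' hw',
    hDt.g_sub_of_perp hA hv hu hw hu' hw', hDt.g_sub_of_perp hA hw hu hv hu' hv',
    g_nij_of_torsionFree hD hu hv hw hv' hw']
  linarith [g_covF_comm (J := J) (D := D) (J.ap_mem hu) hw hv x,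
    g_covF_comm (J := J) (D := D) (J.ap_mem hv) hw hu x,
    g_covF_comm (J := J) (D := D) (J.ap_mem hw) hv hu x, g_covF_ap_comm hDu₀ hw hv hu x,
    g_covF_ap_comm hDu₀ hv hw hu x, g_covF_ap_comm hDu₀ hu hw hv x]

theorem torsion_u₀ (hDt : J.IsTildeConnection D A Dt) (hA : J.IsSymmetrizedCovF D A)
    (hD : D.TorsionFree) (hDu₀ : D.PreservesSec J.u₀) {u v : ∀ x, E.Fib x}
    (hu : u ∈ E.secs) (hv : v ∈ E.secs) (x : M) :
    Dt.torsion u v J.u₀ x = (1 / 2) * E.g x (J.lieF u x) (J.F x (v x)) := by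
  have hL := g_lieF hD hDu₀ hu (J.ap_mem hv) x
  rw [ap_apply] at hL
  rw [D.torsion_eq_of_torsionFree hD Dt hu hv J.u₀_mem, hDt.g_sub_u₀ hA hu hv,
    hDt.g_sub_u₀ hA hv hu, hDt.g_u₀_sub hA hDu₀ hu hv, hL]
  ring

end IsTildeConnection

end BnGACS

theorem torsion_of_tilde_genConnection_general
    (E : OddExactCourantAlgebroid n M) (J : BnGACS E)
    (D : GenConnection E.toCourantAlgebroid)
    (hTF : D.TorsionFree) (hDu₀ : D.PreservesSec J.u₀)
    (A : (∀ x, E.Fib x) → (∀ x, E.Fib x) → (∀ x, E.Fib x))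
    (hAsymm : ∀ u v w, u ∈ E.secs → v ∈ E.secs → w ∈ E.secs → ∀ x,
      E.g x (A u v x) (w x) = E.g x (A u w x) (v x))
    (hAtriv : ∀ u, u ∈ E.secs → ∀ x, A u J.u₀ x = 0)
    (hAdef : ∀ u v w, u ∈ E.secs → v ∈ E.secs → w ∈ E.secs →
      J.Perp v → J.Perp w → ∀ x,
      E.g x (A u v x) (w x)
        = (1 / 2) * (E.g x (J.covF D v u x) (w x) + E.g x (J.covF D w u x) (v x)))
    (Dt : GenConnection E.toCourantAlgebroid)
    (hDt : ∀ u v w, u ∈ E.secs → v ∈ E.secs → w ∈ E.secs → ∀ x,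
      E.g x (Dt.D u v x) (w x)
        = E.g x (D.D u v x) (w x)
          - (1 / 4) * E.g x (A u (J.ap v) x + J.F x (A u v x)) (w x)
          - (1 / 2) * E.g x (J.F x (J.covF D u v x)) (w x)) :
    (∀ u v w, u ∈ E.secs → v ∈ E.secs → w ∈ E.secs →
      J.Perp u → J.Perp v → J.Perp w → ∀ x,
      Dt.torsion u v w x = (1 / 4) * E.g x (J.Nij u v x) (w x)) ∧
    (∀ u v, u ∈ E.secs → v ∈ E.secs → ∀ x,
      Dt.torsion u v J.u₀ x = (1 / 2) * E.g x (J.lieF u x) (J.F x (v x))) := by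
  have hA : J.IsSymmetrizedCovF D A := ⟨hAsymm, hAtriv, hAdef⟩
  have hDt' : J.IsTildeConnection D A Dt := hDt
  exact ⟨fun u v w hu hv hw hu' hv' hw' x =>
      hDt'.torsion_of_perp hA hTF hDu₀ hu hv hw hu' hv' hw' x,
    fun u v hu hv x => hDt'.torsion_u₀ hA hTF hDu₀ hu hv x⟩

/-- In the setting of the construction of `D̃` (with `E` odd exact,
`𝓕` a `Bₙ`-generalized almost complex structure with `Ker 𝓕` spanned by `u₀`, `D`
torsion-free with `Du₀ = 0`, `A_u` as before, and `D̃` defined by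
`⟨D̃_u v, w⟩ = ⟨D_u v, w⟩ − ¼⟨{A_u,𝓕}v, w⟩ − ½⟨𝓕(D_u𝓕)v, w⟩`), the torsion of `D̃`
satisfies `T^{D̃}(u,v,w) = ¼⟨N_𝓕(u,v),w⟩` on `Γ(U^⊥)` and
`T^{D̃}(u,v,u₀) = ½⟨(𝐋_{u₀}𝓕)u, 𝓕v⟩` for all `u,v ∈ Γ(E)`. -/
theorem torsion_of_tilde_genConnection
    (E : OddExactCourantAlgebroid n M) (J : BnGACS E)
    (D : GenConnection E.toCourantAlgebroid)
    (hTF : D.TorsionFree) (hDu₀ : D.PreservesSec J.u₀)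
    (A : (∀ x, E.Fib x) → (∀ x, E.Fib x) → (∀ x, E.Fib x))
    (hAsecs : ∀ u v, u ∈ E.secs → v ∈ E.secs → A u v ∈ E.secs)
    (hAsymm : ∀ u v w, u ∈ E.secs → v ∈ E.secs → w ∈ E.secs → ∀ x,
      E.g x (A u v x) (w x) = E.g x (A u w x) (v x))
    (hAtriv : ∀ u, u ∈ E.secs → ∀ x, A u J.u₀ x = 0)
    (hAdef : ∀ u v w, u ∈ E.secs → v ∈ E.secs → w ∈ E.secs →
      J.Perp v → J.Perp w → ∀ x,
      E.g x (A u v x) (w x)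
        = (1 / 2) * (E.g x (J.covF D v u x) (w x) + E.g x (J.covF D w u x) (v x)))
    (Dt : GenConnection E.toCourantAlgebroid)
    (hDt : ∀ u v w, u ∈ E.secs → v ∈ E.secs → w ∈ E.secs → ∀ x,
      E.g x (Dt.D u v x) (w x)
        = E.g x (D.D u v x) (w x)
          - (1 / 4) * E.g x (A u (J.ap v) x + J.F x (A u v x)) (w x)
          - (1 / 2) * E.g x (J.F x (J.covF D u v x)) (w x)) :
    (∀ u v w, u ∈ E.secs → v ∈ E.secs → w ∈ E.secs →
      J.Perp u → J.Perp v → J.Perp w → ∀ x,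
      Dt.torsion u v w x = (1 / 4) * E.g x (J.Nij u v x) (w x)) ∧
    (∀ u v, u ∈ E.secs → v ∈ E.secs → ∀ x,
      Dt.torsion u v J.u₀ x = (1 / 2) * E.g x (J.lieF u x) (J.F x (v x))) :=
  torsion_of_tilde_genConnection_general E J D hTF hDu₀ A hAsymm hAtriv hAdef Dt hDt
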